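/- arXiv:1111.2417 — 3 statements merged into one kernel-verified Lean document; each statement's English description precedes it below -/
import Mathlib

section
/- Every lattice L of the oscillator group G (a discrete subgroup with compact quotient G/L) of the form L = L₁ × L₂ × L₃ × L₄, where each Lᵢ is a subset of ℝ, is isomorphic as a group to Λ_{k,i} for some positive integer k and some i ∈ {0, π, π/2}. -/
open Real

/-- The real 3-dimensional Heisenberg group, as `ℝ³` with the multiplication
`(x,y,z)·(x',y',z') = (x+x', y+y', z+z'+ (xy'-x'y)/2)`. -/
@[ext] structure Heis : Type where
  x : ℝ
  y : ℝ
  z : ℝ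

namespace Heis

noncomputable instance : Mul Heis :=
  ⟨fun a b => ⟨a.x + b.x, a.y + b.y, a.z + b.z + (a.x * b.y - b.x * a.y) / 2⟩⟩

instance : One Heis := ⟨⟨0, 0, 0⟩⟩

instance : Inv Heis := ⟨fun a => ⟨-a.x, -a.y, -a.z⟩⟩

@[simp] lemma mul_x (a b : Heis) : (a * b).x = a.x + b.x := rfl
@[simp] lemma mul_y (a b : Heis) : (a * b).y = a.y + b.y := rfl
@[simp] lemma mul_z (a b : Heis) :
    (a * b).z = a.z + b.z + (a.x * b.y - b.x * a.y) / 2 := rfl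
@[simp] lemma one_x : (1 : Heis).x = 0 := rfl
@[simp] lemma one_y : (1 : Heis).y = 0 := rfl
@[simp] lemma one_z : (1 : Heis).z = 0 := rfl
@[simp] lemma inv_x (a : Heis) : a⁻¹.x = -a.x := rfl
@[simp] lemma inv_y (a : Heis) : a⁻¹.y = -a.y := rfl
@[simp] lemma inv_z (a : Heis) : a⁻¹.z = -a.z := rfl

noncomputable instance : Group Heis where
  mul_assoc a b c := by ext <;> simp <;> ring
  one_mul a := by ext <;> simp
  mul_one a := by ext <;> simp
  inv_mul_cancel a := by ext <;> simp

end Heis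

/-- The rotation action `α(t)` of `ℝ` on the Heisenberg group. -/
noncomputable def alphaMap (t : ℝ) (v : Heis) : Heis :=
  ⟨v.x * cos t + v.y * sin t, -v.x * sin t + v.y * cos t, v.z⟩

@[simp] lemma alphaMap_x (t : ℝ) (v : Heis) :
    (alphaMap t v).x = v.x * cos t + v.y * sin t := rfl
@[simp] lemma alphaMap_y (t : ℝ) (v : Heis) :
    (alphaMap t v).y = -v.x * sin t + v.y * cos t := rfl
@[simp] lemma alphaMap_z (t : ℝ) (v : Heis) : (alphaMap t v).z = v.z := rfl

/-- The oscillator group `G = ℝ ⋉_α H₃(ℝ)`. -/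
@[ext] structure Osc : Type where
  t : ℝ
  v : Heis

namespace Osc

noncomputable instance : Mul Osc := ⟨fun a b => ⟨a.t + b.t, a.v * alphaMap a.t b.v⟩⟩
instance : One Osc := ⟨⟨0, 1⟩⟩
noncomputable instance : Inv Osc := ⟨fun a => ⟨-a.t, alphaMap (-a.t) a.v⁻¹⟩⟩

@[simp] lemma mul_t (a b : Osc) : (a * b).t = a.t + b.t := rfl
@[simp] lemma mul_v (a b : Osc) : (a * b).v = a.v * alphaMap a.t b.v := rfl
@[simp] lemma one_t : (1 : Osc).t = 0 := rfl
@[simp] lemma one_v : (1 : Osc).v = 1 := rfl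
@[simp] lemma inv_t (a : Osc) : a⁻¹.t = -a.t := rfl
@[simp] lemma inv_v (a : Osc) : a⁻¹.v = alphaMap (-a.t) a.v⁻¹ := rfl

lemma alphaMap_one (t : ℝ) : alphaMap t (1 : Heis) = 1 := by
  ext <;> simp

lemma alphaMap_mul (t : ℝ) (v w : Heis) :
    alphaMap t (v * w) = alphaMap t v * alphaMap t w := by
  ext
  · simp; ring
  · simp; ring
  · simp
    linear_combination (w.x * v.y - v.x * w.y) * (sin_sq_add_cos_sq t)

lemma alphaMap_add (s t : ℝ) (v : Heis) :
    alphaMap (s + t) v = alphaMap s (alphaMap t v) := by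
  ext <;> simp [cos_add, sin_add] <;> ring

lemma alphaMap_zero (v : Heis) : alphaMap 0 v = v := by
  ext <;> simp

noncomputable instance : Group Osc where
  mul_assoc a b c := by
    refine Osc.ext (by simp; ring) ?_
    simp only [Osc.mul_v, Osc.mul_t, alphaMap_mul, ← alphaMap_add]
    rw [mul_assoc]
  one_mul a := Osc.ext (by simp) (by simp [alphaMap_zero])
  mul_one a := Osc.ext (by simp) (by simp [alphaMap_one])
  inv_mul_cancel a := by
    refine Osc.ext (by simp) ?_
    simp only [Osc.mul_v, Osc.inv_v, Osc.inv_t, Osc.one_v]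
    rw [← alphaMap_mul, inv_mul_cancel, alphaMap_one]

end Osc

/-- `Heis` carries the standard topology of `ℝ³`. -/
noncomputable instance : TopologicalSpace Heis :=
  TopologicalSpace.induced (fun v => (v.x, v.y, v.z)) inferInstance

/-- `Osc` carries the standard topology of `ℝ⁴`. -/
noncomputable instance : TopologicalSpace Osc :=
  TopologicalSpace.induced (fun g => (g.t, g.v.x, g.v.y, g.v.z)) inferInstance

lemma cos_sin_int (n : ℤ) :
    ∃ a b : ℤ, cos (π / 2 * n) = a ∧ sin (π / 2 * n) = b := by
  induction n using Int.induction_on with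
  | zero => exact ⟨1, 0, by simp, by simp⟩
  | succ n ih =>
    obtain ⟨a, b, ha, hb⟩ := ih
    have h : (((n : ℤ) + 1 : ℤ) : ℝ) = ((n : ℤ) : ℝ) + 1 := by push_cast; ring
    refine ⟨-b, a, ?_, ?_⟩
    · rw [h, mul_add, mul_one, cos_add, ha, hb]
      push_cast
      simp
    · rw [h, mul_add, mul_one, sin_add, ha, hb]
      simp
  | pred n ih =>
    obtain ⟨a, b, ha, hb⟩ := ih
    have h : ((-(n : ℤ) - 1 : ℤ) : ℝ) = ((-(n : ℤ) : ℤ) : ℝ) - 1 := by push_cast; ring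
    refine ⟨b, -a, ?_, ?_⟩
    · rw [h, mul_sub, mul_one, cos_sub, ha, hb]
      simp
    · rw [h, mul_sub, mul_one, sin_sub, ha, hb]
      push_cast
      simp

lemma cos_sin_int' (t : ℝ) (h : ∃ j : ℤ, t = π / 2 * j) :
    ∃ a b : ℤ, cos t = a ∧ sin t = b := by
  obtain ⟨j, rfl⟩ := h
  exact cos_sin_int j

/-- The lattice `θℤ ⋉ Γ_k` in the oscillator group, for `θ` an integer multiple of `π/2`. -/
noncomputable def LamTheta (k : ℕ+) (θ : ℝ) (m : ℤ) (hθ : θ = π / 2 * m) : Subgroup Osc where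
  carrier := {g | (∃ n : ℤ, g.t = θ * n) ∧ (∃ a : ℤ, g.v.x = a) ∧ (∃ b : ℤ, g.v.y = b) ∧
    (∃ c : ℤ, g.v.z = (c : ℝ) / (2 * ((k : ℕ) : ℝ)))}
  one_mem' := ⟨⟨0, by simp⟩, ⟨0, by simp⟩, ⟨0, by simp⟩, ⟨0, by simp⟩⟩
  mul_mem' := by
    rintro g h ⟨⟨n₁, hn₁⟩, ⟨a₁, ha₁⟩, ⟨b₁, hb₁⟩, ⟨c₁, hc₁⟩⟩
      ⟨⟨n₂, hn₂⟩, ⟨a₂, ha₂⟩, ⟨b₂, hb₂⟩, ⟨c₂, hc₂⟩⟩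
    obtain ⟨A, B, hA, hB⟩ := cos_sin_int' g.t ⟨m * n₁, by rw [hn₁, hθ]; push_cast; ring⟩
    have hk : ((k : ℕ) : ℝ) ≠ 0 := by
      exact_mod_cast k.ne_zero
    refine ⟨⟨n₁ + n₂, ?_⟩, ⟨a₁ + (a₂ * A + b₂ * B), ?_⟩, ⟨b₁ + (-(a₂ * B) + b₂ * A), ?_⟩,
      ⟨c₁ + c₂ + (k : ℕ) * (a₁ * (-(a₂ * B) + b₂ * A) - (a₂ * A + b₂ * B) * b₁), ?_⟩⟩
    · simp only [Osc.mul_t, hn₁, hn₂]; push_cast; ring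
    · simp only [Osc.mul_v, Heis.mul_x, alphaMap_x, ha₁, ha₂, hb₂, hA, hB]; push_cast; ring
    · simp only [Osc.mul_v, Heis.mul_y, alphaMap_y, hb₁, ha₂, hb₂, hA, hB]; push_cast; ring
    · simp only [Osc.mul_v, Heis.mul_z, alphaMap_x, alphaMap_y, alphaMap_z,
        ha₁, hb₁, ha₂, hb₂, hc₁, hc₂, hA, hB]
      field_simp
      push_cast
      ring
  inv_mem' := by
    rintro g ⟨⟨n₁, hn₁⟩, ⟨a₁, ha₁⟩, ⟨b₁, hb₁⟩, ⟨c₁, hc₁⟩⟩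
    obtain ⟨A, B, hA, hB⟩ := cos_sin_int' g.t ⟨m * n₁, by rw [hn₁, hθ]; push_cast; ring⟩
    refine ⟨⟨-n₁, ?_⟩, ⟨-(a₁ * A) + b₁ * B, ?_⟩, ⟨-(a₁ * B) - b₁ * A, ?_⟩, ⟨-c₁, ?_⟩⟩
    · simp only [Osc.inv_t, hn₁]; push_cast; ring
    · simp only [Osc.inv_v, alphaMap_x, Heis.inv_x, Heis.inv_y, cos_neg, sin_neg,
        ha₁, hb₁, hA, hB]
      push_cast; ring
    · simp only [Osc.inv_v, alphaMap_y, Heis.inv_x, Heis.inv_y, cos_neg, sin_neg,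
        ha₁, hb₁, hA, hB]
      push_cast; ring
    · simp only [Osc.inv_v, alphaMap_z, Heis.inv_z, hc₁]
      push_cast; ring

/-- The lattice `Λ_{k,0} = 2πℤ × Γ_k`. -/
noncomputable def Lam0 (k : ℕ+) : Subgroup Osc :=
  LamTheta k (2 * π) 4 (by push_cast; ring)

/-- The lattice `Λ_{k,π} = πℤ × Γ_k`. -/
noncomputable def LamPi (k : ℕ+) : Subgroup Osc :=
  LamTheta k π 2 (by push_cast; ring)

/-- The lattice `Λ_{k,π/2} = (π/2)ℤ × Γ_k`. -/
noncomputable def LamPi2 (k : ℕ+) : Subgroup Osc :=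
  LamTheta k (π / 2) 1 (by push_cast; ring)

/-- The lattice `Γ_k = ℤ × ℤ × (1/(2k))ℤ` in the Heisenberg group. -/
noncomputable def Gamma (k : ℕ+) : Subgroup Heis where
  carrier := {v | (∃ a : ℤ, v.x = a) ∧ (∃ b : ℤ, v.y = b) ∧
    (∃ c : ℤ, v.z = (c : ℝ) / (2 * ((k : ℕ) : ℝ)))}
  one_mem' := ⟨⟨0, by simp⟩, ⟨0, by simp⟩, ⟨0, by simp⟩⟩
  mul_mem' := by
    rintro v w ⟨⟨a₁, ha₁⟩, ⟨b₁, hb₁⟩, ⟨c₁, hc₁⟩⟩ ⟨⟨a₂, ha₂⟩, ⟨b₂, hb₂⟩, ⟨c₂, hc₂⟩⟩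
    have hk : ((k : ℕ) : ℝ) ≠ 0 := by exact_mod_cast k.ne_zero
    refine ⟨⟨a₁ + a₂, ?_⟩, ⟨b₁ + b₂, ?_⟩, ⟨c₁ + c₂ + (k : ℕ) * (a₁ * b₂ - a₂ * b₁), ?_⟩⟩
    · simp [ha₁, ha₂]
    · simp [hb₁, hb₂]
    · simp only [Heis.mul_z, ha₁, hb₁, ha₂, hb₂, hc₁, hc₂]
      field_simp
      push_cast
      ring
  inv_mem' := by
    rintro v ⟨⟨a₁, ha₁⟩, ⟨b₁, hb₁⟩, ⟨c₁, hc₁⟩⟩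
    refine ⟨⟨-a₁, by simp [ha₁]⟩, ⟨-b₁, by simp [hb₁]⟩, ⟨-c₁, ?_⟩⟩
    simp only [Heis.inv_z, hc₁]
    push_cast
    ring

/-- The subset `pℤ × qℤ × rℤ × sℤ` of the oscillator group. -/
def prodSet (p q r s : ℝ) : Set Osc :=
  {g | (∃ n : ℤ, g.t = p * n) ∧ (∃ n : ℤ, g.v.x = q * n) ∧
    (∃ n : ℤ, g.v.y = r * n) ∧ (∃ n : ℤ, g.v.z = s * n)}

/-!
A discrete subgroup `S` of product form meets each coordinate axis in a discrete subgroup of `ℝ`,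
so `S = aℤ × bℤ × cℤ × dℤ`. Cocompactness forces `a, b, c ≠ 0`: otherwise `t`, `x`, or a
coordinate of the Heisenberg part read in the rotating frame is an unbounded continuous function
invariant under right multiplication by `S`. Multiplying generators shows `cos a ∈ ℤ` and
`bc/2 ∈ dℤ`, so rotation by `a` has order 1, 2 or 4, and in the last case `b = c`. The rescaling
`(t, x, y, z) ↦ (θt/a, x/b, y/c, z/(bc))` is then an isomorphism onto `θℤ ⋉ Γ_k`.
-/

namespace Osc

lemma continuous_coords : Continuous fun g : Osc => (g.t, g.v.x, g.v.y, g.v.z) :=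
  continuous_induced_dom

lemma continuous_t : Continuous fun g : Osc => g.t := continuous_coords.fst

lemma continuous_x : Continuous fun g : Osc => g.v.x := continuous_coords.snd.fst

lemma continuous_y : Continuous fun g : Osc => g.v.y := continuous_coords.snd.snd.fst

lemma continuous_mk {X : Type*} [TopologicalSpace X] {t x y z : X → ℝ} (ht : Continuous t)
    (hx : Continuous x) (hy : Continuous y) (hz : Continuous z) :
    Continuous fun p => (⟨t p, ⟨x p, y p, z p⟩⟩ : Osc) :=
  continuous_induced_rng.2 <| ht.prodMk <| hx.prodMk <| hy.prodMk hz

end Osc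

open Function in
lemma exists_nonneg_forall_mem_iff_of_discreteTopology {G : Type*} [Group G] [TopologicalSpace G]
    (S : Subgroup G) [DiscreteTopology S] (f : ℝ → G) (hf : Continuous f) (hinj : Injective f)
    (hadd : ∀ x y, f (x + y) = f x * f y) :
    ∃ a, 0 ≤ a ∧ ∀ x, f x ∈ S ↔ ∃ n : ℤ, x = a * n := by
  let φ : ℝ →+ Additive G := AddMonoidHom.mk' (fun x => Additive.ofMul (f x)) hadd
  let A : AddSubgroup ℝ := S.toAddSubgroup.comap φ
  have : DiscreteTopology A :=
    .of_continuous_injective (f := fun x : A => (⟨f x, x.2⟩ : S))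
      ((hf.comp continuous_subtype_val).subtype_mk _)
      fun x y h => Subtype.ext (hinj (congrArg Subtype.val h))
  obtain ⟨a, ha⟩ :=
    A.isAddCyclic_iff_exists_zmultiples_eq_top.1 (AddSubgroup.discrete_iff_addCyclic.2 this)
  have ha' : AddSubgroup.zmultiples |a| = A := by
    rcases abs_choice a with h | h <;> simp only [h, AddSubgroup.zmultiples_neg, ha]
  refine ⟨|a|, abs_nonneg a, fun x => ?_⟩
  change x ∈ A ↔ _
  simp only [← ha', AddSubgroup.mem_zmultiples_iff, zsmul_eq_mul, mul_comm, eq_comm]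

lemma exists_coe_eq_prodSet (L₁ L₂ L₃ L₄ : Set ℝ) (S : Subgroup Osc) [DiscreteTopology S]
    (hS : (S : Set Osc) = {g : Osc | g.t ∈ L₁ ∧ g.v.x ∈ L₂ ∧ g.v.y ∈ L₃ ∧ g.v.z ∈ L₄}) :
    ∃ a b c d : ℝ, 0 ≤ b ∧ 0 ≤ c ∧ 0 ≤ d ∧ (S : Set Osc) = prodSet a b c d := by
  have hmem (g : Osc) : g ∈ S ↔ g.t ∈ L₁ ∧ g.v.x ∈ L₂ ∧ g.v.y ∈ L₃ ∧ g.v.z ∈ L₄ := by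
    rw [← SetLike.mem_coe, hS]; rfl
  obtain ⟨h₁, h₂, h₃, h₄⟩ : (0 : ℝ) ∈ L₁ ∧ (0 : ℝ) ∈ L₂ ∧ (0 : ℝ) ∈ L₃ ∧ (0 : ℝ) ∈ L₄ :=
    (hmem 1).1 S.one_mem
  have axis (L : Set ℝ) (f : ℝ → Osc) (hf : Continuous f) (hinj : Function.Injective f)
      (hadd : ∀ x y, f (x + y) = f x * f y) (hL : ∀ x, f x ∈ S ↔ x ∈ L) :
      ∃ a, 0 ≤ a ∧ ∀ x, x ∈ L ↔ ∃ n : ℤ, x = a * n := by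
    simpa only [hL] using exists_nonneg_forall_mem_iff_of_discreteTopology S f hf hinj hadd
  obtain ⟨a, -, ha⟩ := axis L₁ (fun x => ⟨x, ⟨0, 0, 0⟩⟩)
    (Osc.continuous_mk continuous_id continuous_const continuous_const continuous_const)
    (fun x y h => congrArg Osc.t h) (fun x y => by ext <;> simp) (by simp [hmem, h₂, h₃, h₄])
  obtain ⟨b, hb, hb'⟩ := axis L₂ (fun x => ⟨0, ⟨x, 0, 0⟩⟩)
    (Osc.continuous_mk continuous_const continuous_id continuous_const continuous_const)
    (fun x y h => congrArg (·.v.x) h) (fun x y => by ext <;> simp) (by simp [hmem, h₁, h₃, h₄])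
  obtain ⟨c, hc, hc'⟩ := axis L₃ (fun x => ⟨0, ⟨0, x, 0⟩⟩)
    (Osc.continuous_mk continuous_const continuous_const continuous_id continuous_const)
    (fun x y h => congrArg (·.v.y) h) (fun x y => by ext <;> simp) (by simp [hmem, h₁, h₂, h₄])
  obtain ⟨d, hd, hd'⟩ := axis L₄ (fun x => ⟨0, ⟨0, 0, x⟩⟩)
    (Osc.continuous_mk continuous_const continuous_const continuous_const continuous_id)
    (fun x y h => congrArg (·.v.z) h) (fun x y => by ext <;> simp) (by simp [hmem, h₁, h₂, h₃])
  refine ⟨a, b, c, d, hb, hc, hd, ?_⟩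
  ext g
  rw [hS]
  exact and_congr (ha _) (and_congr (hb' _) (and_congr (hc' _) (hd' _)))

lemma abs_cos_eq_one_of_sin_eq_zero {t : ℝ} (h : sin t = 0) : |cos t| = 1 := by
  rcases sin_eq_zero_iff_cos_eq.1 h with h | h <;> simp [h]

lemma bddAbove_range_of_forall_mul_eq {G : Type*} [Group G] [TopologicalSpace G]
    {S : Subgroup G} [CompactSpace (G ⧸ S)] {f : G → ℝ} (hf : Continuous f)
    (hinv : ∀ g, ∀ s ∈ S, f (g * s) = f g) : BddAbove (Set.range f) := by
  have hwd (g h : G) (hgh : QuotientGroup.leftRel S g h) : f g = f h := by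
    rw [QuotientGroup.leftRel_apply] at hgh
    rw [← hinv g _ hgh, mul_inv_cancel_left]
  have hF : Continuous fun q : G ⧸ S => Quotient.liftOn' q f hwd := hf.quotient_liftOn' hwd
  refine (isCompact_range hF).bddAbove.mono ?_
  rintro _ ⟨g, rfl⟩
  exact ⟨QuotientGroup.mk g, rfl⟩

lemma not_compactSpace_of_forall_mul_eq {G : Type*} [Group G] [TopologicalSpace G]
    {S : Subgroup G} {f : G → ℝ} (hf : Continuous f) (hinv : ∀ g, ∀ s ∈ S, f (g * s) = f g)
    (hunbdd : ∀ M, ∃ g, M ≤ f g) : ¬CompactSpace (G ⧸ S) := by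
  intro _
  refine not_bddAbove_iff.2 (fun M => ?_) (bddAbove_range_of_forall_mul_eq hf hinv)
  obtain ⟨g, hg⟩ := hunbdd (M + 1)
  exact ⟨f g, ⟨g, rfl⟩, by linarith⟩

namespace Osc

/-- The Heisenberg component of `g` in the splitting `g = ⟨g.t, 1⟩ * ⟨0, g.body⟩`. -/
noncomputable def body (g : Osc) : Heis := alphaMap (-g.t) g.v

lemma body_mul (g s : Osc) : (g * s).body = alphaMap (-s.t) (g.body * s.v) := by
  rw [body, body, mul_t, mul_v, neg_add_rev, alphaMap_add, alphaMap_mul (-g.t),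
    ← alphaMap_add (-g.t), neg_add_cancel, alphaMap_zero]

lemma continuous_body_x : Continuous fun g : Osc => g.body.x := by
  simp only [body, alphaMap_x]
  exact (continuous_x.mul (continuous_cos.comp continuous_t.neg)).add
    (continuous_y.mul (continuous_sin.comp continuous_t.neg))

lemma continuous_body_y : Continuous fun g : Osc => g.body.y := by
  simp only [body, alphaMap_y]
  exact (continuous_x.neg.mul (continuous_sin.comp continuous_t.neg)).add
    (continuous_y.mul (continuous_cos.comp continuous_t.neg))

variable {S : Subgroup Osc}

lemma not_compactSpace_of_forall_t_eq_zero (h : ∀ s ∈ S, s.t = 0) :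
    ¬CompactSpace (Osc ⧸ S) :=
  not_compactSpace_of_forall_mul_eq continuous_t (fun g s hs => by simp [h s hs])
    fun M => ⟨⟨M, 1⟩, le_rfl⟩

lemma not_compactSpace_of_forall_x_eq_zero_and_y_eq_zero
    (h : ∀ s ∈ S, s.v.x = 0 ∧ s.v.y = 0) : ¬CompactSpace (Osc ⧸ S) :=
  not_compactSpace_of_forall_mul_eq continuous_x (fun g s hs => by simp [h s hs])
    fun M => ⟨⟨0, ⟨M, 0, 0⟩⟩, le_rfl⟩

lemma not_compactSpace_of_forall_sin_eq_zero_and_x_eq_zero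
    (h : ∀ s ∈ S, sin s.t = 0 ∧ s.v.x = 0) : ¬CompactSpace (Osc ⧸ S) :=
  not_compactSpace_of_forall_mul_eq continuous_body_x.abs
    (fun g s hs => by
      simp [body_mul, (h s hs).1, (h s hs).2, abs_mul, abs_cos_eq_one_of_sin_eq_zero])
    fun M => ⟨⟨0, ⟨M, 0, 0⟩⟩, by simpa [body] using le_abs_self M⟩

lemma not_compactSpace_of_forall_sin_eq_zero_and_y_eq_zero
    (h : ∀ s ∈ S, sin s.t = 0 ∧ s.v.y = 0) : ¬CompactSpace (Osc ⧸ S) :=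
  not_compactSpace_of_forall_mul_eq continuous_body_y.abs
    (fun g s hs => by
      simp [body_mul, (h s hs).1, (h s hs).2, abs_mul, abs_cos_eq_one_of_sin_eq_zero])
    fun M => ⟨⟨0, ⟨0, M, 0⟩⟩, by simpa [body] using le_abs_self M⟩

end Osc

lemma sin_mul_intCast_eq_zero {a : ℝ} (h : sin a = 0) (n : ℤ) : sin (a * n) = 0 := by
  obtain ⟨j, rfl⟩ := Real.sin_eq_zero_iff.1 h
  rw [mul_right_comm, ← Int.cast_mul, sin_int_mul_pi]

lemma eq_of_eq_mul_intCast {b c : ℝ} (hb : 0 < b) (hc : 0 < c) {u w : ℤ} (hu : b = c * u)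
    (hw : c = b * w) : b = c := by
  have hu1 : (1 : ℝ) ≤ u := by
    exact_mod_cast Int.cast_pos.1 (pos_of_mul_pos_right (hu ▸ hb : 0 < c * u) hc.le)
  have hw1 : (1 : ℝ) ≤ w := by
    exact_mod_cast Int.cast_pos.1 (pos_of_mul_pos_right (hw ▸ hc : 0 < b * w) hb.le)
  nlinarith

lemma cos_eq_neg_one_or_zero_or_one_of_eq_intCast {a : ℝ} {N : ℤ} (h : cos a = N) :
    cos a = -1 ∨ cos a = 0 ∨ cos a = 1 := by
  have h₁ : N ≤ 1 := by exact_mod_cast h ▸ cos_le_one a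
  have h₂ : -1 ≤ N := by exact_mod_cast h ▸ neg_one_le_cos a
  rw [h]
  interval_cases N <;> simp

lemma exists_pnat_mul_eq {b c d : ℝ} (hb : 0 < b) (hc : 0 < c) (hd : 0 ≤ d)
    (h : ∃ n : ℤ, b * c / 2 = d * n) : ∃ k : ℕ+, b * c = 2 * d * k := by
  obtain ⟨n, hn⟩ := h
  have hdn : 0 < d * n := hn ▸ by positivity
  lift n to ℕ using Int.cast_nonneg_iff.1 (pos_of_mul_pos_right hdn hd).le
  refine ⟨⟨n, Nat.cast_pos.1 (pos_of_mul_pos_right hdn hd)⟩, ?_⟩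
  rw [PNat.mk_coe]
  push_cast at hn
  linarith

namespace Osc

noncomputable def rescale (l b c : ℝ) (g : Osc) : Osc :=
  ⟨l * g.t, ⟨g.v.x / b, g.v.y / c, g.v.z / (b * c)⟩⟩

lemma rescale_inv_rescale {l b c : ℝ} (hl : l ≠ 0) (hb : b ≠ 0) (hc : c ≠ 0) (g : Osc) :
    rescale l⁻¹ b⁻¹ c⁻¹ (rescale l b c g) = g := by
  ext <;> simp only [rescale] <;> field_simp

noncomputable def rescaleEquiv {l b c : ℝ} (hl : l ≠ 0) (hb : b ≠ 0) (hc : c ≠ 0) : Osc ≃ Osc where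
  toFun := rescale l b c
  invFun := rescale l⁻¹ b⁻¹ c⁻¹
  left_inv := rescale_inv_rescale hl hb hc
  right_inv g := by
    simpa using rescale_inv_rescale (inv_ne_zero hl) (inv_ne_zero hb) (inv_ne_zero hc) g

lemma rescale_mul {l b c : ℝ} {g : Osc} (s : Osc)
    (hrot : ((l * g.t : ℝ) : Real.Angle) = g.t) (hbc : b = c ∨ sin g.t = 0) :
    rescale l b c (g * s) = rescale l b c g * rescale l b c s := by
  have hcos : cos (l * g.t) = cos g.t := by simpa using congrArg Real.Angle.cos hrot
  have hsin : sin (l * g.t) = sin g.t := by simpa using congrArg Real.Angle.sin hrot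
  rcases hbc with rfl | h
  · ext <;> simp only [rescale, mul_t, mul_v, Heis.mul_x, Heis.mul_y, Heis.mul_z, alphaMap_x,
      alphaMap_y, alphaMap_z, hcos, hsin] <;> ring
  · ext <;> simp only [rescale, mul_t, mul_v, Heis.mul_x, Heis.mul_y, Heis.mul_z, alphaMap_x,
      alphaMap_y, alphaMap_z, hcos, hsin, h] <;> ring

end Osc

lemma nonempty_mulEquiv_of_rescale {S T : Subgroup Osc} {l b c : ℝ} (hl : l ≠ 0) (hb : b ≠ 0)
    (hc : c ≠ 0) (hmem : ∀ g, g ∈ S ↔ Osc.rescale l b c g ∈ T)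
    (hrot : ∀ g ∈ S, ((l * g.t : ℝ) : Real.Angle) = g.t)
    (hbc : ∀ g ∈ S, b = c ∨ sin g.t = 0) : Nonempty (S ≃* T) :=
  ⟨{ (Osc.rescaleEquiv hl hb hc).subtypeEquiv hmem with
      map_mul' := fun g s => Subtype.ext <|
        Osc.rescale_mul s (hrot g g.2) (hbc g g.2) }⟩

section ProdSet

variable {S : Subgroup Osc} {a b c d : ℝ}

lemma mem_iff_of_coe_eq_prodSet (hS : (S : Set Osc) = prodSet a b c d) {g : Osc} :
    g ∈ S ↔ g ∈ prodSet a b c d := by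
  rw [← SetLike.mem_coe, hS]

lemma prodSet_neg : prodSet (-a) b c d = prodSet a b c d := by
  ext g
  refine and_congr ⟨fun ⟨n, hn⟩ => ⟨-n, by simp [hn]⟩, fun ⟨n, hn⟩ => ⟨-n, by simp [hn]⟩⟩ Iff.rfl

lemma prodSet_relations (hS : (S : Set Osc) = prodSet a b c d) :
    (∃ n : ℤ, b * cos a = b * n) ∧ (∃ n : ℤ, -(b * sin a) = c * n) ∧
      (∃ n : ℤ, c * sin a = b * n) ∧ ∃ n : ℤ, b * c / 2 = d * n := by
  have hT : (⟨a, ⟨0, 0, 0⟩⟩ : Osc) ∈ S :=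
    (mem_iff_of_coe_eq_prodSet hS).2 ⟨⟨1, by simp⟩, ⟨0, by simp⟩, ⟨0, by simp⟩, ⟨0, by simp⟩⟩
  have hX : (⟨0, ⟨b, 0, 0⟩⟩ : Osc) ∈ S :=
    (mem_iff_of_coe_eq_prodSet hS).2 ⟨⟨0, by simp⟩, ⟨1, by simp⟩, ⟨0, by simp⟩, ⟨0, by simp⟩⟩
  have hY : (⟨0, ⟨0, c, 0⟩⟩ : Osc) ∈ S :=
    (mem_iff_of_coe_eq_prodSet hS).2 ⟨⟨0, by simp⟩, ⟨0, by simp⟩, ⟨1, by simp⟩, ⟨0, by simp⟩⟩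
  obtain ⟨-, h₁, h₂, -⟩ := (mem_iff_of_coe_eq_prodSet hS).1 (mul_mem hT hX)
  obtain ⟨-, h₃, -, -⟩ := (mem_iff_of_coe_eq_prodSet hS).1 (mul_mem hT hY)
  obtain ⟨-, -, -, h₄⟩ := (mem_iff_of_coe_eq_prodSet hS).1 (mul_mem hX hY)
  exact ⟨by simpa using h₁, by simpa using h₂, by simpa using h₃, by simpa using h₄⟩

lemma prodSet_ne_zero_of_compactSpace (hS : (S : Set Osc) = prodSet a b c d)
    [CompactSpace (Osc ⧸ S)] : a ≠ 0 ∧ b ≠ 0 ∧ c ≠ 0 := by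
  have hmem {s : Osc} (hs : s ∈ S) := (mem_iff_of_coe_eq_prodSet hS).1 hs
  have hsin (ha : sin a = 0) {s : Osc} (hs : s ∈ S) : sin s.t = 0 := by
    obtain ⟨⟨n, hn⟩, -⟩ := hmem hs
    rw [hn, sin_mul_intCast_eq_zero ha]
  have ha : a ≠ 0 := by
    rintro rfl
    refine Osc.not_compactSpace_of_forall_t_eq_zero (fun s hs => ?_) ‹_›
    obtain ⟨⟨n, hn⟩, -⟩ := hmem hs
    simpa using hn
  refine ⟨ha, not_or.1 fun hbc => ?_⟩
  obtain ⟨-, ⟨m, hm⟩, ⟨n, hn⟩, -⟩ := prodSet_relations hS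
  rcases eq_or_ne b 0 with rfl | hb <;> rcases eq_or_ne c 0 with rfl | hc
  · refine Osc.not_compactSpace_of_forall_x_eq_zero_and_y_eq_zero (fun s hs => ?_) ‹_›
    obtain ⟨-, ⟨p, hp⟩, ⟨q, hq⟩, -⟩ := hmem hs
    simp [hp, hq]
  · refine Osc.not_compactSpace_of_forall_sin_eq_zero_and_x_eq_zero (fun s hs => ?_) ‹_›
    obtain ⟨-, ⟨p, hp⟩, -⟩ := hmem hs
    exact ⟨hsin (by simpa [hc] using hn) hs, by simp [hp]⟩
  · refine Osc.not_compactSpace_of_forall_sin_eq_zero_and_y_eq_zero (fun s hs => ?_) ‹_›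
    obtain ⟨-, -, ⟨q, hq⟩, -⟩ := hmem hs
    exact ⟨hsin (by simpa [hb] using hm) hs, by simp [hq]⟩
  · exact hbc.elim hb hc

lemma nonempty_mulEquiv_lamTheta
    (hS : (S : Set Osc) = prodSet a b c d) (ha : a ≠ 0) (hb : b ≠ 0) (hc : c ≠ 0) (k : ℕ+)
    (hk : b * c = 2 * d * k) {θ : ℝ} {m : ℤ} (hθ : θ = π / 2 * m) (hθ0 : θ ≠ 0)
    (hrot : (θ : Real.Angle) = a) (hbc : b = c ∨ sin a = 0) :
    Nonempty (S ≃* LamTheta k θ m hθ) := by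
  refine nonempty_mulEquiv_of_rescale (l := θ / a) (div_ne_zero hθ0 ha) hb hc (fun g => ?_)
    (fun g hg => ?_) (fun g hg => ?_)
  · rw [mem_iff_of_coe_eq_prodSet hS]
    refine and_congr (exists_congr fun n => ?_) (and_congr (exists_congr fun n => ?_)
      (and_congr (exists_congr fun n => ?_) (exists_congr fun n => ?_)))
    all_goals simp only [Osc.rescale]; field_simp
    -- only the `z`-coordinate survives `field_simp`; it needs `hk`
    rw [mul_assoc, mul_assoc, hk, show (n : ℝ) * (2 * d * k) = d * n * (2 * k) by ring,
      mul_left_inj' (by positivity)]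
  all_goals obtain ⟨⟨n, hn⟩, -⟩ := (mem_iff_of_coe_eq_prodSet hS).1 hg
  · rw [hn, show θ / a * (a * n) = n • θ by field_simp; rw [zsmul_eq_mul, mul_comm],
      ← zsmul_eq_mul', Real.Angle.coe_zsmul, Real.Angle.coe_zsmul, hrot]
  · exact hbc.imp_right fun h => hn ▸ sin_mul_intCast_eq_zero h n

lemma nonempty_mulEquiv_lamPi2
    (hS : (S : Set Osc) = prodSet a b c d) (ha : a ≠ 0) (hb : 0 < b) (hc : 0 < c) (k : ℕ+)
    (hk : b * c = 2 * d * k) (hcos : cos a = 0) (hsin : sin a = 1) :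
    Nonempty (S ≃* LamPi2 k) := by
  obtain ⟨-, ⟨u, hu⟩, ⟨w, hw⟩, -⟩ := prodSet_relations hS
  rw [hsin, mul_one] at hu hw
  have hbc : b = c := eq_of_eq_mul_intCast hb hc (u := -u) (by push_cast; linarith) hw
  exact nonempty_mulEquiv_lamTheta hS ha hb.ne' hc.ne' k hk _ (by positivity)
    (Real.Angle.cos_sin_inj (by simp [hcos]) (by simp [hsin])) (Or.inl hbc)

end ProdSet

/-- Every lattice of the oscillator group of product form
`L = L₁ × L₂ × L₃ × L₄` with `Lᵢ ⊆ ℝ` is isomorphic as a group to `Λ_{k,0}`, `Λ_{k,π}` or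
`Λ_{k,π/2}` for some positive integer `k`. -/
theorem statement16 (L₁ L₂ L₃ L₄ : Set ℝ) (S : Subgroup Osc)
    (hS : (S : Set Osc) = {g : Osc | g.t ∈ L₁ ∧ g.v.x ∈ L₂ ∧ g.v.y ∈ L₃ ∧ g.v.z ∈ L₄})
    (hdisc : DiscreteTopology S) (hcpt : CompactSpace (Osc ⧸ S)) :
    ∃ k : ℕ+, Nonempty (S ≃* Lam0 k) ∨ Nonempty (S ≃* LamPi k) ∨
      Nonempty (S ≃* LamPi2 k) := by
  obtain ⟨a, b, c, d, hb, hc, hd, hSp⟩ := exists_coe_eq_prodSet L₁ L₂ L₃ L₄ S hS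
  obtain ⟨ha, hb0, hc0⟩ := prodSet_ne_zero_of_compactSpace hSp
  replace hb := hb.lt_of_ne' hb0
  replace hc := hc.lt_of_ne' hc0
  obtain ⟨⟨N, hN⟩, -, -, he⟩ := prodSet_relations hSp
  obtain ⟨k, hk⟩ := exists_pnat_mul_eq hb hc hd he
  refine ⟨k, ?_⟩
  rcases cos_eq_neg_one_or_zero_or_one_of_eq_intCast (mul_left_cancel₀ hb0 hN) with h | h | h
  · have hsin : sin a = 0 := sin_eq_zero_iff_cos_eq.2 (Or.inr h)
    exact Or.inr (Or.inl (nonempty_mulEquiv_lamTheta hSp ha hb0 hc0 k hk _ pi_ne_zero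
      (Real.Angle.cos_sin_inj (by simp [h]) (by simp [hsin])) (Or.inr hsin)))
  · rcases cos_eq_zero_iff_sin_eq.1 h with hsin | hsin
    · exact Or.inr (Or.inr (nonempty_mulEquiv_lamPi2 hSp ha hb hc k hk h hsin))
    · rw [← prodSet_neg] at hSp
      exact Or.inr (Or.inr (nonempty_mulEquiv_lamPi2 hSp (neg_ne_zero.2 ha) hb hc k hk
        (by rwa [cos_neg]) (by rw [sin_neg, hsin, neg_neg])))
  · have hsin : sin a = 0 := sin_eq_zero_iff_cos_eq.2 (Or.inl h)
    exact Or.inl (nonempty_mulEquiv_lamTheta hSp ha hb0 hc0 k hk _ (by positivity)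
      (Real.Angle.cos_sin_inj (by simp [h]) (by simp [hsin])) (Or.inr hsin))
end

section
/- The oscillator Lie algebra 𝔤 admits no abelian complex structure: there is no ℝ-linear map J : 𝔤 → 𝔤 satisfying J ∘ J = −id and [Ju, Jv] = [u, v] for all u, v ∈ 𝔤. -/
/-!
If `[Ju, Jv] = [u, v]` and `J² = -1`, then every `u` equals `J(J(-u))`, so
`[u, Jz] = [J(-u), z]`; hence `J` maps the centre into itself. The centre of the oscillator
algebra is the line `ℝ Z`, so `Z` would be a real eigenvector of `J`, which is impossible
since `J² = -1`.
-/

/-- The Lie bracket of the oscillator Lie algebra `𝔤` in the coordinates `(T, X, Y, Z)`: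
`[T,X] = -Y`, `[T,Y] = X`, `[X,Y] = Z`, all other brackets of basis elements zero. -/
def oscBracket (u v : ℝ × ℝ × ℝ × ℝ) : ℝ × ℝ × ℝ × ℝ :=
  (0,
   u.1 * v.2.2.1 - v.1 * u.2.2.1,
   -(u.1 * v.2.1 - v.1 * u.2.1),
   u.2.1 * v.2.2.1 - u.2.2.1 * v.2.1)

theorem forall_bracket_apply_eq_zero_of_forall_bracket_eq_zero {M : Type*} [InvolutiveNeg M]
    [Zero M] (bracket : M → M → M) (J : M → M) (hJ2 : ∀ u, J (J u) = -u)
    (hJ : ∀ u v, bracket (J u) (J v) = bracket u v) {z : M} (hz : ∀ w, bracket w z = 0) (w : M) :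
    bracket w (J z) = 0 := by
  rw [← neg_neg w, ← hJ2 (-w), hJ, hz]

theorem LinearMap.apply_ne_smul_of_apply_apply_eq_neg {M : Type*} [AddCommGroup M] [Module ℝ M]
    (J : M →ₗ[ℝ] M) (hJ2 : ∀ u, J (J u) = -u) {v : M} (hv : v ≠ 0) (c : ℝ) : J v ≠ c • v := by
  intro hcv
  have hsq : (c ^ 2 + 1) • v = 0 := by
    rw [add_smul, one_smul, pow_two, mul_smul, ← hcv, ← J.map_smul, ← hcv, hJ2, neg_add_cancel]
  exact hv ((smul_eq_zero.mp hsq).resolve_left (by positivity))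

theorem eq_smul_of_forall_oscBracket_eq_zero {d : ℝ × ℝ × ℝ × ℝ}
    (hd : ∀ w, oscBracket w d = 0) : d = d.2.2.2 • ((0 : ℝ), (0 : ℝ), (0 : ℝ), (1 : ℝ)) := by
  have hT := hd (1, 0, 0, 0)
  have hX := hd (0, 1, 0, 0)
  simp only [oscBracket, Prod.ext_iff, Prod.fst_zero, Prod.snd_zero] at hT hX
  ext <;> simp only [Prod.smul_mk, smul_eq_mul, mul_zero, mul_one] <;> linarith

/-- The oscillator Lie algebra admits no abelian complex structure: there is
no `ℝ`-linear `J : 𝔤 → 𝔤` with `J ∘ J = -id` and `[Ju, Jv] = [u, v]` for all `u, v`. -/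
theorem statement18 :
    ¬ ∃ J : (ℝ × ℝ × ℝ × ℝ) →ₗ[ℝ] ℝ × ℝ × ℝ × ℝ,
      (∀ u, J (J u) = -u) ∧ ∀ u v, oscBracket (J u) (J v) = oscBracket u v := by
  rintro ⟨J, hJ2, hJ⟩
  set Z : ℝ × ℝ × ℝ × ℝ := (0, 0, 0, 1)
  have hJZ_central : ∀ w, oscBracket w (J Z) = 0 :=
    forall_bracket_apply_eq_zero_of_forall_bracket_eq_zero oscBracket J hJ2 hJ
      (fun w => by simp [Z, oscBracket])
  exact J.apply_ne_smul_of_apply_apply_eq_neg hJ2 (by simp) _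
    (eq_smul_of_forall_oscBracket_eq_zero hJZ_central)
end

section
/- The oscillator Lie algebra 𝔤 admits no symplectic structure: there is no alternating bilinear form ω : 𝔤 × 𝔤 → ℝ that is nondegenerate and closed, i.e. satisfying ω([u,v],w) + ω([v,w],u) + ω([w,u],v) = 0 for all u, v, w ∈ 𝔤. In contrast, on the Lie algebra ℝ × 𝔥₃ the alternating bilinear form ω defined on the basis by ω(T,X) = 1, ω(Y,Z) = 1 and ω(T,Y) = ω(T,Z) = ω(X,Y) = ω(X,Z) = 0 is nondegenerate and closed in this sense; hence ℝ × 𝔥₃ admits a symplectic structure while 𝔤 does not. -/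
/-- The Lie bracket of `ℝ × 𝔥₃` in the coordinates `(T, X, Y, Z)`: the only nonzero bracket of
basis elements is `[X,Y] = Z`. -/
def h3Bracket (u v : ℝ × ℝ × ℝ × ℝ) : ℝ × ℝ × ℝ × ℝ :=
  (0, 0, 0, u.2.1 * v.2.2.1 - u.2.2.1 * v.2.1)

/-- `ω` is a symplectic structure for the Lie algebra with bracket `br`: it is an alternating
bilinear form which is nondegenerate and closed. -/
def IsSymplecticFor (br : (ℝ × ℝ × ℝ × ℝ) → (ℝ × ℝ × ℝ × ℝ) → ℝ × ℝ × ℝ × ℝ)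
    (ω : (ℝ × ℝ × ℝ × ℝ) →ₗ[ℝ] (ℝ × ℝ × ℝ × ℝ) →ₗ[ℝ] ℝ) : Prop :=
  (∀ u, ω u u = 0) ∧ (∀ u, (∀ v, ω u v = 0) → u = 0) ∧
    ∀ u v w, ω (br u v) w + ω (br v w) u + ω (br w u) v = 0

section ClosedForm

variable {R V : Type*} [CommRing R] [AddCommGroup V] [Module R V]
  {br : V → V → V} {ω : V →ₗ[R] V →ₗ[R] R}

theorem apply_bracket_eq_zero_of_central
    (hclosed : ∀ u v w, ω (br u v) w + ω (br v w) u + ω (br w u) v = 0)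
    {z : V} (hzl : ∀ u, br z u = 0) (hzr : ∀ u, br u z = 0) (u v : V) :
    ω (br u v) z = 0 := by
  simpa [hzl, hzr] using hclosed u v z

end ClosedForm

theorem oscBracket_swap (u v : ℝ × ℝ × ℝ × ℝ) : oscBracket v u = -oscBracket u v := by
  ext <;> simp only [oscBracket, Prod.fst_neg, Prod.snd_neg] <;> ring

theorem oscBracket_T_X : oscBracket (1, 0, 0, 0) (0, 1, 0, 0) = -(0, 0, 1, 0) := by
  simp [oscBracket]

theorem oscBracket_T_Y : oscBracket (1, 0, 0, 0) (0, 0, 1, 0) = (0, 1, 0, 0) := by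
  simp [oscBracket]

theorem oscBracket_X_Y : oscBracket (0, 1, 0, 0) (0, 0, 1, 0) = (0, 0, 0, 1) := by
  simp [oscBracket]

theorem oscBracket_Z_left (u : ℝ × ℝ × ℝ × ℝ) : oscBracket (0, 0, 0, 1) u = 0 := by
  simp [oscBracket]

theorem oscBracket_Z_right (u : ℝ × ℝ × ℝ × ℝ) : oscBracket u (0, 0, 0, 1) = 0 := by
  rw [oscBracket_swap, oscBracket_Z_left, neg_zero]

theorem IsSymplecticFor.flip_oscBracket_Z {ω : (ℝ × ℝ × ℝ × ℝ) →ₗ[ℝ] (ℝ × ℝ × ℝ × ℝ) →ₗ[ℝ] ℝ}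
    (hω : IsSymplecticFor oscBracket ω) : ω.flip (0, 0, 0, 1) = 0 := by
  obtain ⟨halt, -, hclosed⟩ := hω
  have hderived := apply_bracket_eq_zero_of_central hclosed oscBracket_Z_left oscBracket_Z_right
  ext
  all_goals simp only [LinearMap.coe_comp, Function.comp_apply, LinearMap.inl_apply,
    LinearMap.inr_apply, LinearMap.flip_apply, LinearMap.zero_apply, LinearMap.zero_comp]
  · have hZT := hclosed (1, 0, 0, 0) (0, 1, 0, 0) (0, 0, 1, 0)
    rw [oscBracket_T_X, oscBracket_X_Y, oscBracket_swap, oscBracket_T_Y] at hZT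
    simp only [map_neg, LinearMap.neg_apply, halt, neg_zero, add_zero, zero_add] at hZT
    exact (LinearMap.IsAlt.eq_iff halt).1 hZT
  · have hXZ := hderived (1, 0, 0, 0) (0, 0, 1, 0)
    rwa [oscBracket_T_Y] at hXZ
  · have hYZ := hderived (0, 1, 0, 0) (1, 0, 0, 0)
    rwa [oscBracket_swap, oscBracket_T_X, neg_neg] at hYZ
  · exact halt _

theorem not_isSymplecticFor_oscBracket (ω : (ℝ × ℝ × ℝ × ℝ) →ₗ[ℝ] (ℝ × ℝ × ℝ × ℝ) →ₗ[ℝ] ℝ) :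
    ¬ IsSymplecticFor oscBracket ω := fun hω => by
  have hZ : ((0, 0, 0, 1) : ℝ × ℝ × ℝ × ℝ) = 0 := hω.2.1 _ fun v =>
    (LinearMap.IsAlt.eq_iff hω.1).1 (LinearMap.congr_fun hω.flip_oscBracket_Z v)
  simp at hZ

def h3SymplecticForm : (ℝ × ℝ × ℝ × ℝ) →ₗ[ℝ] (ℝ × ℝ × ℝ × ℝ) →ₗ[ℝ] ℝ :=
  LinearMap.mk₂ ℝ
    (fun u v => u.1 * v.2.1 - u.2.1 * v.1 + u.2.2.1 * v.2.2.2 - u.2.2.2 * v.2.2.1)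
    (fun _ _ _ => by simp only [Prod.fst_add, Prod.snd_add]; ring)
    (fun _ _ _ => by simp only [Prod.smul_fst, Prod.smul_snd, smul_eq_mul]; ring)
    (fun _ _ _ => by simp only [Prod.fst_add, Prod.snd_add]; ring)
    (fun _ _ _ => by simp only [Prod.smul_fst, Prod.smul_snd, smul_eq_mul]; ring)

@[simp]
theorem h3SymplecticForm_apply (u v : ℝ × ℝ × ℝ × ℝ) :
    h3SymplecticForm u v = u.1 * v.2.1 - u.2.1 * v.1 + u.2.2.1 * v.2.2.2 - u.2.2.2 * v.2.2.1 :=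
  rfl

theorem isSymplecticFor_h3Bracket : IsSymplecticFor h3Bracket h3SymplecticForm := by
  refine ⟨fun u => by simp only [h3SymplecticForm_apply]; ring, fun u hu => ?_, fun u v w => ?_⟩
  · have hT := hu (1, 0, 0, 0)
    have hX := hu (0, 1, 0, 0)
    have hY := hu (0, 0, 1, 0)
    have hZ := hu (0, 0, 0, 1)
    simp only [h3SymplecticForm_apply, mul_zero, mul_one, sub_zero, zero_sub, add_zero,
      zero_add, neg_eq_zero] at hT hX hY hZ
    ext <;> assumption
  · simp only [h3SymplecticForm_apply, h3Bracket]
    ring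

/-- The oscillator Lie algebra `𝔤` admits no symplectic structure, while on
`ℝ × 𝔥₃` the alternating bilinear form with `ω(T,X) = 1`, `ω(Y,Z) = 1` and
`ω(T,Y) = ω(T,Z) = ω(X,Y) = ω(X,Z) = 0` is symplectic. -/
theorem statement19 :
    (¬ ∃ ω : (ℝ × ℝ × ℝ × ℝ) →ₗ[ℝ] (ℝ × ℝ × ℝ × ℝ) →ₗ[ℝ] ℝ,
      IsSymplecticFor oscBracket ω) ∧
    ∃ ω : (ℝ × ℝ × ℝ × ℝ) →ₗ[ℝ] (ℝ × ℝ × ℝ × ℝ) →ₗ[ℝ] ℝ,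
      IsSymplecticFor h3Bracket ω ∧
      ω (1, 0, 0, 0) (0, 1, 0, 0) = 1 ∧ ω (0, 0, 1, 0) (0, 0, 0, 1) = 1 ∧
      ω (1, 0, 0, 0) (0, 0, 1, 0) = 0 ∧ ω (1, 0, 0, 0) (0, 0, 0, 1) = 0 ∧
      ω (0, 1, 0, 0) (0, 0, 1, 0) = 0 ∧ ω (0, 1, 0, 0) (0, 0, 0, 1) = 0 :=
  ⟨fun ⟨ω, hω⟩ => not_isSymplecticFor_oscBracket ω hω,
    h3SymplecticForm, isSymplecticFor_h3Bracket, by norm_num⟩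
end
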